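/- arXiv:0907.4927 — 2 statements merged into one kernel-verified Lean document; each statement's English description precedes it below -/
import Mathlib

section
/- Under the Lie–Poisson realization hypotheses, fix ε ∈ K and for 2 ≤ i ≤ N and λ ∈ K with λ ≠ 0 and λ ≠ ε define the loop coproducts Δ^(i)_λ(α) := λ⁻¹ • (Σ_{j=1}^{i−1} y α j) + (λ − ε)⁻¹ • (y α i). Then for every 2 ≤ i ≤ N, all admissible λ ≠ μ and all α, β ∈ Fin M: {Δ^(i)_λ(α), Δ^(i)_μ(β)} = (μ − λ)⁻¹ • Σ_γ (c α β γ) • (Δ^(i)_λ(γ) − Δ^(i)_μ(γ)); i.e. for each fixed i these loop coproducts satisfy the rational Gaudin algebra relations. -/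
open scoped BigOperators

structure PoissonStructure (K B : Type*) [CommRing K] [CommRing B] [Algebra K B] where
  bracket : B →ₗ[K] B →ₗ[K] B
  antisymm : ∀ a b : B, bracket a b = - bracket b a
  jacobi : ∀ a b c : B,
    bracket a (bracket b c) + bracket b (bracket c a) + bracket c (bracket a b) = 0
  leibniz : ∀ a b c : B, bracket a (b * c) = bracket a b * c + b * bracket a c

/-!
The loop coproduct at level `i` is the rational Gaudin Lax operator
`Δ_λ(α) = ∑_j (λ - z_j)⁻¹ • y α j` over the sites `j ≤ i` with poles `z_j = 0` for `j < i`
and `z_i = ε`. For any choice of poles, bilinearity and the site-wise Lie–Poisson relations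
reduce `{Δ_λ(α), Δ_μ(β)}` to `∑_j (λ - z_j)⁻¹ (μ - z_j)⁻¹ ∑_γ c α β γ • y γ j`, and the
partial fraction `(λ - z)⁻¹ (μ - z)⁻¹ = (μ - λ)⁻¹ ((λ - z)⁻¹ - (μ - z)⁻¹)` turns this into
the Gaudin relation.
-/

theorem inv_sub_mul_inv_sub_eq {K : Type*} [Field K] {lam mu z : K}
    (hlam : lam ≠ z) (hmu : mu ≠ z) (hne : lam ≠ mu) :
    (lam - z)⁻¹ * (mu - z)⁻¹ = (mu - lam)⁻¹ * ((lam - z)⁻¹ - (mu - z)⁻¹) := by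
  rw [inv_sub_inv (sub_ne_zero.mpr hlam) (sub_ne_zero.mpr hmu), sub_sub_sub_cancel_right,
    mul_div_assoc', inv_mul_cancel₀ (sub_ne_zero.mpr hne.symm), one_div, mul_inv]

section GaudinLax

variable {K B A ι : Type*} [Field K] [CommRing B] [Algebra K B] (y : A → ι → B)

def gaudinLax (z : ι → K) (s : Finset ι) (lam : K) (α : A) : B :=
  ∑ j ∈ s, (lam - z j)⁻¹ • y α j

theorem gaudinLax_update_insert [DecidableEq ι] {F : Finset ι} {I : ι} (hI : I ∉ F)
    (ε lam : K) (α : A) :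
    gaudinLax y (Function.update 0 I ε) (insert I F) lam α =
      lam⁻¹ • ∑ j ∈ F, y α j + (lam - ε)⁻¹ • y α I := by
  rw [gaudinLax, Finset.sum_insert hI, Function.update_self, add_comm, Finset.smul_sum]
  congr 1
  refine Finset.sum_congr rfl fun j hj => ?_
  rw [Function.update_of_ne (ne_of_mem_of_not_mem hj hI), Pi.zero_apply, sub_zero]

end GaudinLax

namespace PoissonStructure

variable {K B A ι : Type*} [Field K] [CommRing B] [Algebra K B] [Fintype A]
  (P : PoissonStructure K B) (c : A → A → A → K) (y : A → ι → B)

theorem bracket_sum_smul_sum_smul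
    (hsep : ∀ (α β : A) (i j : ι), i ≠ j → P.bracket (y α i) (y β j) = 0)
    (hsame : ∀ (α β : A) (i : ι), P.bracket (y α i) (y β i) = ∑ γ, c α β γ • y γ i)
    (s : Finset ι) (a b : ι → K) (α β : A) :
    P.bracket (∑ j ∈ s, a j • y α j) (∑ k ∈ s, b k • y β k) =
      ∑ γ, c α β γ • ∑ j ∈ s, (a j * b j) • y γ j := by
  have diagonal : ∀ j ∈ s, ∑ k ∈ s, P.bracket (a j • y α j) (b k • y β k) =
      (a j * b j) • ∑ γ, c α β γ • y γ j := by
    intro j hj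
    rw [Finset.sum_eq_single_of_mem j hj fun k _ hkj => by simp [hsep α β j k hkj.symm]]
    simp [hsame, smul_smul, mul_comm]
  simp only [map_sum, LinearMap.sum_apply]
  rw [Finset.sum_comm, Finset.sum_congr rfl diagonal]
  simp only [Finset.smul_sum, smul_smul]
  rw [Finset.sum_comm]
  simp only [mul_comm]

theorem gaudinLax_bracket
    (hsep : ∀ (α β : A) (i j : ι), i ≠ j → P.bracket (y α i) (y β j) = 0)
    (hsame : ∀ (α β : A) (i : ι), P.bracket (y α i) (y β i) = ∑ γ, c α β γ • y γ i)
    (z : ι → K) (s : Finset ι) {lam mu : K} (hne : lam ≠ mu)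
    (hlam : ∀ j ∈ s, lam ≠ z j) (hmu : ∀ j ∈ s, mu ≠ z j) (α β : A) :
    P.bracket (gaudinLax y z s lam α) (gaudinLax y z s mu β) =
      (mu - lam)⁻¹ • ∑ γ, c α β γ • (gaudinLax y z s lam γ - gaudinLax y z s mu γ) := by
  simp only [gaudinLax, bracket_sum_smul_sum_smul P c y hsep hsame, ← Finset.sum_sub_distrib,
    ← sub_smul]
  rw [Finset.smul_sum (r := (mu - lam)⁻¹)]
  refine Finset.sum_congr rfl fun γ _ => ?_
  rw [smul_comm (mu - lam)⁻¹ (c α β γ), Finset.smul_sum (r := (mu - lam)⁻¹)]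
  congr 1
  refine Finset.sum_congr rfl fun j hj => ?_
  rw [smul_smul, inv_sub_mul_inv_sub_eq (hlam j hj) (hmu j hj) hne]

end PoissonStructure

/-- for each fixed `i`, the loop coproducts
`Δ^(i)_λ(α) = λ⁻¹ • Σ_{j=1}^{i-1} y α j + (λ - ε)⁻¹ • y α i` satisfy the rational
Gaudin algebra relations. -/
theorem loop_coproducts_rational_gaudin
    {K B : Type*} [Field K] [CommRing B] [Algebra K B]
    (P : PoissonStructure K B) {M N : ℕ}
    (c : Fin M → Fin M → Fin M → K)
    (y : Fin M → Fin N → B)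
    (hsep : ∀ (α β : Fin M) (i j : Fin N), i ≠ j → P.bracket (y α i) (y β j) = 0)
    (hsame : ∀ (α β : Fin M) (i : Fin N),
      P.bracket (y α i) (y β i) = ∑ γ, c α β γ • y γ i)
    (ε : K)
    (D : ℕ → K → Fin M → B)
    (hD : ∀ (i : ℕ) (hi2 : 2 ≤ i) (hiN : i ≤ N) (lam : K) (α : Fin M),
      D i lam α =
        lam⁻¹ • (∑ j ∈ Finset.univ.filter (fun j : Fin N => (j : ℕ) + 1 < i), y α j)
          + (lam - ε)⁻¹ • y α ⟨i - 1, by omega⟩) :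
    ∀ (i : ℕ), 2 ≤ i → i ≤ N →
      ∀ (lam mu : K), lam ≠ mu → lam ≠ 0 → lam ≠ ε → mu ≠ 0 → mu ≠ ε →
      ∀ (α β : Fin M),
        P.bracket (D i lam α) (D i mu β) =
          (mu - lam)⁻¹ • ∑ γ, c α β γ • (D i lam γ - D i mu γ) := by
  intro i hi2 hiN lam mu hne hlam0 hlamE hmu0 hmuE α β
  set I : Fin N := ⟨i - 1, by omega⟩
  set F := Finset.univ.filter (fun j : Fin N => (j : ℕ) + 1 < i)
  have hI : I ∉ F := by simp [F, I]; omega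
  have hD_gaudin (ν : K) (γ : Fin M) :
      D i ν γ = gaudinLax y (Function.update 0 I ε) (insert I F) ν γ := by
    rw [hD i hi2 hiN, gaudinLax_update_insert y hI]
  have avoids_poles {ν : K} (h0 : ν ≠ 0) (hε : ν ≠ ε) (j : Fin N) (_ : j ∈ insert I F) :
      ν ≠ Function.update (0 : Fin N → K) I ε j := by
    rcases eq_or_ne j I with rfl | hj
    · simpa using hε
    · simpa [hj] using h0
  simp only [hD_gaudin]
  exact P.gaudinLax_bracket c y hsep hsame _ _ hne (avoids_poles hlam0 hlamE)
    (avoids_poles hmu0 hmuE) α β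
end

section
/- Under the Lie–Poisson realization hypotheses, fix ε ∈ K, define for 2 ≤ i ≤ N and λ ∈ K with λ ≠ 0, λ ≠ ε the loop coproducts Δ^(i)_λ(α) := λ⁻¹ • (Σ_{j=1}^{i−1} y α j) + (λ − ε)⁻¹ • (y α i), and define the primitive coproducts Δ^(k)(α) := Σ_{j=1}^{k} y α j. Then for every formal Casimir C for c, every 2 ≤ i ≤ N, every k with i ≤ k ≤ N, every admissible λ and every α ∈ Fin M: {(aeval Δ^(i)_λ) C, Δ^(k)(α)} = 0. In particular the images of the Casimirs under the loop coproducts Poisson-commute with all the N-th primitive coproducts Δ^(N)(α). -/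
open scoped BigOperators

section Aux
variable {K B : Type*} [CommRing K] [CommRing B] [Algebra K B]

lemma PS_bracket_one (P : PoissonStructure K B) (b : B) : P.bracket b 1 = 0 := by
  have h := P.leibniz b 1 1
  rw [mul_one, one_mul, mul_one] at h
  exact (add_eq_left.mp h.symm)

lemma PS_one_bracket (P : PoissonStructure K B) (b : B) : P.bracket 1 b = 0 := by
  rw [P.antisymm, PS_bracket_one, neg_zero]

lemma PS_mul_bracket (P : PoissonStructure K B) (x y b : B) :
    P.bracket (x * y) b = P.bracket x b * y + x * P.bracket y b := by
  rw [P.antisymm (x*y) b, P.leibniz b x y, P.antisymm b x, P.antisymm b y]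
  ring

lemma PS_bracket_aeval {M : ℕ} (P : PoissonStructure K B) (Δ : Fin M → B) (b : B)
    (p : MvPolynomial (Fin M) K) :
    P.bracket (MvPolynomial.aeval Δ p) b
      = ∑ α, MvPolynomial.aeval Δ (MvPolynomial.pderiv α p) * P.bracket (Δ α) b := by
  induction p using MvPolynomial.induction_on with
  | C a =>
      simp [Algebra.algebraMap_eq_smul_one, PS_one_bracket]
  | add p q hp hq =>
      simp [map_add, hp, hq, Finset.sum_add_distrib, add_mul]
  | mul_X p i hp =>
      rw [map_mul, MvPolynomial.aeval_X, PS_mul_bracket, hp]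
      simp only [MvPolynomial.pderiv_mul, MvPolynomial.pderiv_X, map_add, map_mul,
        MvPolynomial.aeval_X, add_mul, Finset.sum_add_distrib, Finset.sum_mul]
      congr 1
      · exact Finset.sum_congr rfl fun _ _ => by ring
      · simp [Pi.single_apply, apply_ite (MvPolynomial.aeval Δ), mul_ite, ite_mul,
          Finset.sum_ite_eq]
end Aux

/-- the images of a formal Casimir under the loop coproducts `Δ^(i)_λ`
Poisson-commute with all the primitive coproducts `Δ^(k)(α)` for `k ≥ i`. -/
theorem loop_coproduct_casimir_commutes_with_primitive
    {K B : Type*} [Field K] [CharZero K] [CommRing B] [Algebra K B]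
    (P : PoissonStructure K B) {M N : ℕ} (hM : 0 < M) (hN : 0 < N)
    (c : Fin M → Fin M → Fin M → K)
    (y : Fin M → Fin N → B)
    (hsep : ∀ (α β : Fin M) (i j : Fin N), i ≠ j → P.bracket (y α i) (y β j) = 0)
    (hsame : ∀ (α β : Fin M) (i : Fin N),
      P.bracket (y α i) (y β i) = ∑ γ, c α β γ • y γ i)
    (ε : K)
    (D : ℕ → K → Fin M → B)
    (hD : ∀ (i : ℕ) (hi2 : 2 ≤ i) (hiN : i ≤ N) (lam : K) (α : Fin M),
      D i lam α =
        lam⁻¹ • (∑ j ∈ Finset.univ.filter (fun j : Fin N => (j : ℕ) + 1 < i), y α j)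
          + (lam - ε)⁻¹ • y α ⟨i - 1, by omega⟩)
    (Dp : ℕ → Fin M → B)
    (hDp : ∀ (k : ℕ) (α : Fin M),
      Dp k α = ∑ j ∈ Finset.univ.filter (fun j : Fin N => (j : ℕ) < k), y α j)
    (C : MvPolynomial (Fin M) K)
    (hC : ∀ β : Fin M,
      ∑ α, MvPolynomial.pderiv α C * (∑ γ, c α β γ • MvPolynomial.X γ) = 0) :
    ∀ (i k : ℕ), 2 ≤ i → i ≤ k → k ≤ N →
      ∀ (lam : K), lam ≠ 0 → lam ≠ ε →
      ∀ (α : Fin M),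
        P.bracket (MvPolynomial.aeval (D i lam) C) (Dp k α) = 0 := by
  intro i k hi2 hik hkN lam _ _ α
  have hiN : i ≤ N := le_trans hik hkN
  have hby : ∀ (β : Fin M) (j : Fin N), (j : ℕ) < k →
      P.bracket (y β j) (Dp k α) = ∑ γ, c β α γ • y γ j := by
    intro β j hj
    rw [hDp, map_sum,
      Finset.sum_eq_single_of_mem j (by simp [hj])
        (fun l _ hlj => hsep β α j l (fun h => hlj h.symm))]
    exact hsame β α j
  have key : ∀ β : Fin M, P.bracket (D i lam β) (Dp k α)
      = MvPolynomial.aeval (D i lam)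
          (∑ γ, c β α γ • MvPolynomial.X γ : MvPolynomial (Fin M) K) := by
    intro β
    rw [hD i hi2 hiN lam β]
    simp only [map_add, map_smul, LinearMap.add_apply, LinearMap.smul_apply,
      map_sum, LinearMap.sum_apply, LinearMap.coe_smul, Pi.smul_apply]
    have h1 : ∑ j ∈ Finset.univ.filter (fun j : Fin N => (j : ℕ) + 1 < i),
        P.bracket (y β j) (Dp k α)
        = ∑ j ∈ Finset.univ.filter (fun j : Fin N => (j : ℕ) + 1 < i),
          ∑ γ, c β α γ • y γ j :=
      Finset.sum_congr rfl fun j hj => hby β j (by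
        have := (Finset.mem_filter.mp hj).2; omega)
    rw [h1, hby β _ (by simp; omega)]
    simp only [map_sum, map_smul, MvPolynomial.aeval_X]
    rw [Finset.sum_comm]
    simp only [Finset.smul_sum, smul_add]
    rw [← Finset.sum_add_distrib]
    refine Finset.sum_congr rfl fun γ _ => ?_
    rw [hD i hi2 hiN lam γ]
    simp [smul_add, Finset.smul_sum, smul_smul, mul_comm]
  rw [PS_bracket_aeval]
  calc ∑ β, MvPolynomial.aeval (D i lam) (MvPolynomial.pderiv β C)
        * P.bracket (D i lam β) (Dp k α)
      = ∑ β, MvPolynomial.aeval (D i lam)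
          (MvPolynomial.pderiv β C * (∑ γ, c β α γ • MvPolynomial.X γ)) := by
        exact Finset.sum_congr rfl fun β _ => by rw [key β, map_mul]
    _ = MvPolynomial.aeval (D i lam)
          (∑ β, MvPolynomial.pderiv β C * (∑ γ, c β α γ • MvPolynomial.X γ)) := by
        rw [map_sum]
    _ = 0 := by rw [hC α, map_zero]
end
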